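/- arXiv:2011.11549 — 2 statements merged into one kernel-verified Lean document; each statement's English description precedes it below -/
import Mathlib

section
/- Let p be a prime number and let A be a commutative ring with bounded p^∞-torsion, with bound N. Then for every ν ≥ 1, the canonical ring map from A to its p-adic completion Â restricts to a bijection from the p^ν-torsion subgroup A[p^ν] = {a ∈ A : p^ν·a = 0} onto the p^ν-torsion subgroup Â[p^ν] = {x ∈ Â : p^ν·x = 0}. -/
/-!
A `t^ν`-torsion element of `Â` is a compatible family of residues; lifting the residue mod
`t^(k+ν)` and correcting by a multiple of `t^k` produces a `t^ν`-torsion lift mod `t^k` in `M`.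
Bounded torsion makes `t^ν`-torsion elements of `M` determined by their residue mod `t^N`:
the difference of two of them is `t^N s` with `t^(ν+N) s = 0`, so `t^N s = 0`.  Hence all
these lifts coincide, and the common lift maps to the given element of `Â`.
-/

section

variable {R M : Type*} [CommRing R] [AddCommGroup M] [Module R M]

namespace Submodule

theorem mem_ideal_span_singleton_pow_smul_top_iff (t : R) (n : ℕ) (x : M) :
    x ∈ (Ideal.span {t} ^ n • ⊤ : Submodule R M) ↔ ∃ y, t ^ n • y = x := by
  rw [Ideal.span_singleton_pow, ideal_span_singleton_smul, mem_smul_pointwise_iff_exists]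
  simp

theorem injOn_mkQ_pow_smul_top_of_bounded_torsion (t : R) {N : ℕ}
    (hbd : ∀ m : M, (∃ n, t ^ n • m = 0) → t ^ N • m = 0) (ν : ℕ) :
    Set.InjOn (mkQ (Ideal.span {t} ^ N • ⊤ : Submodule R M)) {m | t ^ ν • m = 0} := by
  intro x hx y hy hxy
  obtain ⟨s, hs⟩ := (mem_ideal_span_singleton_pow_smul_top_iff t N (x - y)).mp
    ((Quotient.eq _).mp hxy)
  have hs_torsion : t ^ (ν + N) • s = 0 := by
    rw [pow_add, mul_smul, hs, smul_sub, hx.out, hy.out, sub_zero]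
  rw [← sub_eq_zero, ← hs, hbd s ⟨_, hs_torsion⟩]

end Submodule

open Submodule

namespace AdicCompletion

theorem transitionMap_mk (I : Ideal R) {m n : ℕ} (h : m ≤ n) (x : M) :
    transitionMap I M h (Submodule.Quotient.mk x) = Submodule.Quotient.mk x :=
  factor_mk _ x

theorem exists_pow_smul_eq_zero_mk_eq_val {t : R} {ν : ℕ}
    {x : AdicCompletion (Ideal.span {t}) M} (hx : t ^ ν • x = 0) (k : ℕ) :
    ∃ m : M, t ^ ν • m = 0 ∧ Submodule.Quotient.mk m = x.val k := by
  obtain ⟨b, hb⟩ := Submodule.Quotient.mk_surjective _ (x.val (k + ν))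
  have hb_mem : t ^ ν • b ∈ (Ideal.span {t} ^ (k + ν) • ⊤ : Submodule R M) := by
    rw [← Submodule.Quotient.mk_eq_zero, Submodule.Quotient.mk_smul, hb, ← val_smul_apply, hx,
      val_zero_apply]
  obtain ⟨c, hc⟩ := (mem_ideal_span_singleton_pow_smul_top_iff t (k + ν) _).mp hb_mem
  refine ⟨b - t ^ k • c, ?_, ?_⟩
  · rw [smul_sub, ← hc, smul_smul, ← pow_add, add_comm, sub_self]
  · rw [← x.property (Nat.le_add_right k ν), ← hb, transitionMap_mk,
      Submodule.Quotient.eq, sub_sub_cancel_left, mem_ideal_span_singleton_pow_smul_top_iff]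
    exact ⟨-c, smul_neg _ _⟩

theorem of_bijOn_pow_smul_eq_zero (t : R) {N : ℕ}
    (hbd : ∀ m : M, (∃ n, t ^ n • m = 0) → t ^ N • m = 0) (ν : ℕ) :
    Set.BijOn (of (Ideal.span {t}) M) {m | t ^ ν • m = 0}
      {x | t ^ ν • x = 0} := by
  have hinj := injOn_mkQ_pow_smul_top_of_bounded_torsion t hbd ν
  refine ⟨fun m hm => by simp [← map_smul, hm.out], fun m hm m' hm' h =>
    hinj hm hm' (by simpa using congrArg (·.val N) h), fun x hx => ?_⟩
  obtain ⟨m, hm, hmN⟩ := exists_pow_smul_eq_zero_mk_eq_val hx N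
  refine ⟨m, hm, ext fun n => ?_⟩
  obtain ⟨m', hm', hm'n⟩ := exists_pow_smul_eq_zero_mk_eq_val hx (max n N)
  have hmm' : m = m' := hinj hm hm' <| by
    simp only [mkQ_apply]
    rw [hmN, ← x.property (le_max_right n N), ← hm'n, transitionMap_mk]
  rw [of_apply, mkQ_apply, hmm', ← x.property (le_max_left n N), ← hm'n, transitionMap_mk]

end AdicCompletion

end

theorem padicCompletion_torsion_bijOn_general
    (p : ℕ) (A : Type*) [CommRing A] (N : ℕ)
    (hbd : ∀ a : A, (∃ ν : ℕ, (p : A) ^ ν * a = 0) → (p : A) ^ N * a = 0)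
    (ν : ℕ) :
    Set.BijOn (algebraMap A (AdicCompletion (Ideal.span {(p : A)}) A))
      {a : A | (p : A) ^ ν * a = 0}
      {x : AdicCompletion (Ideal.span {(p : A)}) A |
        (p : AdicCompletion (Ideal.span {(p : A)}) A) ^ ν * x = 0} := by
  have hmul_eq_smul : ∀ x : AdicCompletion (Ideal.span {(p : A)}) A,
      (p : AdicCompletion (Ideal.span {(p : A)}) A) ^ ν * x = (p : A) ^ ν • x := fun x => by
    rw [Algebra.smul_def, map_pow, map_natCast]
  simp only [hmul_eq_smul]
  exact AdicCompletion.of_bijOn_pow_smul_eq_zero (p : A) hbd ν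

/-- **Bounded `p^∞`-torsion and `p`-adic completion.**
Let `p` be a prime and `A` a commutative ring with bounded `p^∞`-torsion with bound `N`
(every element of `A` killed by some power of `p` is killed by `p^N`).  Then for every
`ν ≥ 1` the canonical map from `A` to its `p`-adic completion
`Â = AdicCompletion (Ideal.span {p}) A` restricts to a bijection from the `p^ν`-torsion
of `A` onto the `p^ν`-torsion of `Â`. -/
theorem padicCompletion_torsion_bijOn
    (p : ℕ) (hp : p.Prime) (A : Type*) [CommRing A] (N : ℕ)
    (hbd : ∀ a : A, (∃ ν : ℕ, (p : A) ^ ν * a = 0) → (p : A) ^ N * a = 0)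
    (ν : ℕ) (hν : 1 ≤ ν) :
    Set.BijOn (algebraMap A (AdicCompletion (Ideal.span {(p : A)}) A))
      {a : A | (p : A) ^ ν * a = 0}
      {x : AdicCompletion (Ideal.span {(p : A)}) A |
        (p : AdicCompletion (Ideal.span {(p : A)}) A) ^ ν * x = 0} :=
  padicCompletion_torsion_bijOn_general p A N hbd ν
end

section
/- Let p be a prime number and let A be a commutative ring with bounded p^∞-torsion, with bound N (every p-power-torsion element of A is killed by p^N). Then the p-adic completion Â of A has bounded p^∞-torsion with the same bound: every element of Â killed by some power of p is killed by p^N. -/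
/-!
If `p^ν x = 0` in the completion, lift the level-`(n + ν)` component of `x` to `a ∈ A`; then
`p^ν a = p^(n+ν) b` for some `b`, so `a - p^n b` is `p^∞`-torsion, hence killed by `p^N`.
Thus `p^N a ∈ p^n A`, i.e. the level-`n` component of `p^N x` vanishes.
-/

section

variable {R M : Type*} [CommRing R] [AddCommGroup M] [Module R M]

theorem Submodule.mem_span_singleton_pow_smul_top_iff {r : R} {n : ℕ} {m : M} :
    m ∈ (Ideal.span {r} ^ n • ⊤ : Submodule R M) ↔ ∃ y, r ^ n • y = m := by
  simp [Ideal.span_singleton_pow, Submodule.ideal_span_singleton_smul,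
    Submodule.mem_smul_pointwise_iff_exists]

theorem pow_smul_eq_of_pow_smul_eq_pow_add_smul {r : R} {N n ν : ℕ}
    (hbd : ∀ m : M, (∃ ν : ℕ, r ^ ν • m = 0) → r ^ N • m = 0) {m y : M}
    (h : r ^ ν • m = r ^ (n + ν) • y) : r ^ N • m = r ^ n • r ^ N • y := by
  have htorsion : r ^ ν • (m - r ^ n • y) = 0 := by
    rw [smul_sub, h, smul_smul, ← pow_add, add_comm, sub_self]
  rw [smul_comm, ← sub_eq_zero, ← smul_sub]
  exact hbd _ ⟨ν, htorsion⟩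

theorem AdicCompletion.pow_smul_eq_zero_of_pow_smul_eq_zero {r : R} {N ν : ℕ}
    (hbd : ∀ m : M, (∃ ν : ℕ, r ^ ν • m = 0) → r ^ N • m = 0)
    {x : AdicCompletion (Ideal.span {r}) M} (hx : r ^ ν • x = 0) : r ^ N • x = 0 := by
  ext n
  obtain ⟨m, hm⟩ := Submodule.Quotient.mk_surjective _ (x.val (n + ν))
  have hxn : x.val n = Submodule.Quotient.mk m := by
    rw [← transitionMap_comp_eval_apply _ _ (n.le_add_right ν), ← hm]
    rfl
  obtain ⟨y, hy⟩ : ∃ y, r ^ (n + ν) • y = r ^ ν • m := by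
    rw [← Submodule.mem_span_singleton_pow_smul_top_iff, ← Submodule.Quotient.mk_eq_zero,
      Submodule.Quotient.mk_smul, hm, ← val_smul_apply, hx, val_zero_apply]
  rw [val_smul_apply, hxn, ← Submodule.Quotient.mk_smul, val_zero_apply,
    Submodule.Quotient.mk_eq_zero, Submodule.mem_span_singleton_pow_smul_top_iff]
  exact ⟨_, (pow_smul_eq_of_pow_smul_eq_pow_add_smul hbd hy.symm).symm⟩
end

theorem padicCompletion_boundedTorsion_general
    (p : ℕ) (A : Type*) [CommRing A] (N : ℕ)
    (hbd : ∀ a : A, (∃ ν : ℕ, (p : A) ^ ν * a = 0) → (p : A) ^ N * a = 0) :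
    ∀ x : AdicCompletion (Ideal.span {(p : A)}) A,
      (∃ ν : ℕ, (p : AdicCompletion (Ideal.span {(p : A)}) A) ^ ν * x = 0) →
        (p : AdicCompletion (Ideal.span {(p : A)}) A) ^ N * x = 0 := by
  have hmul (k : ℕ) (x : AdicCompletion (Ideal.span {(p : A)}) A) :
      (p : AdicCompletion (Ideal.span {(p : A)}) A) ^ k * x = (p : A) ^ k • x := by
    rw [← Nat.cast_pow, ← Nat.cast_pow, ← nsmul_eq_mul, Nat.cast_smul_eq_nsmul]
  rintro x ⟨ν, hx⟩
  rw [hmul] at hx ⊢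
  exact AdicCompletion.pow_smul_eq_zero_of_pow_smul_eq_zero hbd hx

/-- **The `p`-adic completion has bounded `p^∞`-torsion with the same bound.**
Let `p` be a prime and `A` a commutative ring with bounded `p^∞`-torsion, with bound `N`
(every element of `A` killed by some power of `p` is killed by `p^N`).  Then every element
of the `p`-adic completion `Â = AdicCompletion (Ideal.span {p}) A` killed by some power of
`p` is killed by `p^N`. -/
theorem padicCompletion_boundedTorsion
    (p : ℕ) (hp : p.Prime) (A : Type*) [CommRing A] (N : ℕ)
    (hbd : ∀ a : A, (∃ ν : ℕ, (p : A) ^ ν * a = 0) → (p : A) ^ N * a = 0) :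
    ∀ x : AdicCompletion (Ideal.span {(p : A)}) A,
      (∃ ν : ℕ, (p : AdicCompletion (Ideal.span {(p : A)}) A) ^ ν * x = 0) →
        (p : AdicCompletion (Ideal.span {(p : A)}) A) ^ N * x = 0 :=
  padicCompletion_boundedTorsion_general p A N hbd
end
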